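/- arXiv:1811.01754 — 7 statements merged into one kernel-verified Lean document; each statement's English description precedes it below -/
import Mathlib

section
/- Let L be a bounded distributive lattice and X(L) its prime spectrum with the Priestley topology, ordered by inclusion. Then the map sending an ideal I of L to the open set ⋃_{a ∈ I} N_a is an order isomorphism from the lattice of ideals of L onto the lattice of those open subsets of X(L) that are downward closed with respect to inclusion of prime ideals; its inverse sends an open lower set U to the ideal {a ∈ L : N_a ⊆ U}. -/
/-- The prime spectrum of a bounded distributive lattice `L`: the set of prime
(order-theoretic) ideals of `L`, ordered by inclusion. -/
def PriestleySpec (L : Type*) [DistribLattice L] [BoundedOrder L] : Type _ :=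
  {P : Order.Ideal L // P.IsPrime}

variable {L : Type*} [DistribLattice L] [BoundedOrder L]

instance : PartialOrder (PriestleySpec L) :=
  inferInstanceAs (PartialOrder {P : Order.Ideal L // P.IsPrime})

/-- The basic set `N_a = {P ∈ X(L) : a ∉ P}`. -/
def Nset (a : L) : Set (PriestleySpec L) := {P | a ∉ P.1}

/-- The Priestley topology on the prime spectrum: generated by the sets `N_a`
together with their complements. -/
instance : TopologicalSpace (PriestleySpec L) :=
  TopologicalSpace.generateFrom
    ((Set.range fun a : L => Nset a) ∪ (Set.range fun a : L => (Nset a)ᶜ))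

open Order Set TopologicalSpace Filter Topology

lemma isOpen_Nset (a : L) : IsOpen (Nset a) :=
  TopologicalSpace.GenerateOpen.basic _ (Or.inl ⟨a, rfl⟩)

lemma isOpen_Nset_compl (a : L) : IsOpen (Nset a)ᶜ :=
  TopologicalSpace.GenerateOpen.basic _ (Or.inr ⟨a, rfl⟩)

lemma top_not_mem (P : PriestleySpec L) : ⊤ ∉ P.1 := fun h =>
  P.2.toIsProper.ne_univ (Set.eq_univ_of_forall fun x => P.1.lower le_top h)

lemma isLowerSet_Nset (a : L) : IsLowerSet (Nset a) := fun P Q hQP hP hmem =>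
  hP (hQP hmem)

lemma Nset_top : Nset (⊤ : L) = Set.univ :=
  Set.eq_univ_of_forall fun P => top_not_mem P

lemma Nset_bot : Nset (⊥ : L) = ∅ := by
  ext P; simp [Nset, P.1.bot_mem]

lemma Nset_subset_of_le {a b : L} (h : a ≤ b) : Nset a ⊆ Nset b := fun P hP hmem =>
  hP (P.1.lower h hmem)

lemma Nset_sup (a b : L) : Nset (a ⊔ b) = Nset a ∪ Nset b := by
  ext P
  simp only [Nset, Set.mem_setOf_eq, Set.mem_union, Order.Ideal.sup_mem_iff]
  tauto

lemma Nset_inf (a b : L) : Nset (a ⊓ b) = Nset a ∩ Nset b := by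
  ext P
  simp only [Nset, Set.mem_setOf_eq, Set.mem_inter_iff]
  constructor
  · intro h
    exact ⟨fun ha => h (P.1.lower inf_le_left ha), fun hb => h (P.1.lower inf_le_right hb)⟩
  · rintro ⟨ha, hb⟩ h
    rcases P.2.mem_or_mem h with h' | h' <;> [exact ha h'; exact hb h']

lemma Nset_finsetInf {ι : Type*} (s : Finset ι) (g : ι → L) :
    Nset (s.inf g) = ⋂ i ∈ s, Nset (g i) := by
  classical
  induction s using Finset.induction_on with
  | empty => simp [Nset_top]
  | insert _ _ h ih => rw [Finset.inf_insert, Nset_inf, ih]; simp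

/-- Compactness of the Priestley spectrum, via ultrafilter convergence. -/
instance : CompactSpace (PriestleySpec L) := by
  constructor
  rw [isCompact_iff_ultrafilter_le_nhds]
  intro f _
  set S : Set L := {a | {Q : PriestleySpec L | a ∈ Q.1} ∈ f} with hS
  have hIsIdeal : Order.IsIdeal S := by
    refine ⟨fun a b hba hb => ?_, ⟨⊥, ?_⟩, fun a ha b hb => ?_⟩
    · exact Filter.mem_of_superset hb fun Q hQ => Q.1.lower hba hQ
    · have : {Q : PriestleySpec L | (⊥ : L) ∈ Q.1} = Set.univ :=
        Set.eq_univ_of_forall fun Q => Q.1.bot_mem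
      simp only [S, Set.mem_setOf_eq, this]
      exact Filter.univ_mem
    · refine ⟨a ⊔ b, ?_, le_sup_left, le_sup_right⟩
      have := Filter.inter_mem ha hb
      exact Filter.mem_of_superset this fun Q hQ => Q.1.sup_mem hQ.1 hQ.2
  set I : Order.Ideal L := hIsIdeal.toIdeal with hI
  have hmemI : ∀ a : L, a ∈ I ↔ {Q : PriestleySpec L | a ∈ Q.1} ∈ f := fun a => Iff.rfl
  have hproper : Order.Ideal.IsProper I := by
    constructor
    intro h
    have htop' : (⊤ : L) ∈ (I : Set L) := h.symm ▸ Set.mem_univ (⊤ : L)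
    have htop : {Q : PriestleySpec L | (⊤ : L) ∈ Q.1} ∈ f := (hmemI ⊤).1 htop'
    have : {Q : PriestleySpec L | (⊤ : L) ∈ Q.1} = ∅ := by
      ext Q; simp [top_not_mem Q]
    rw [this] at htop
    exact Ultrafilter.empty_notMem (f := f) htop
  have hprime : Order.Ideal.IsPrime I := by
    haveI := hproper
    apply Order.Ideal.IsPrime.of_mem_or_mem
    intro x y hxy
    rw [hmemI] at hxy ⊢
    rw [hmemI]
    have hsub : {Q : PriestleySpec L | x ⊓ y ∈ Q.1} ⊆
        {Q : PriestleySpec L | x ∈ Q.1} ∪ {Q : PriestleySpec L | y ∈ Q.1} :=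
      fun Q hQ => Q.2.mem_or_mem hQ
    exact Ultrafilter.union_mem_iff.1 (Filter.mem_of_superset hxy hsub)
  refine ⟨⟨I, hprime⟩, Set.mem_univ _, ?_⟩
  refine le_trans (le_iInf₂ fun s hs => ?_) (le_of_eq nhds_generateFrom.symm)
  rcases hs with ⟨hPs, hs⟩
  rw [Filter.le_principal_iff]
  rcases hs with ⟨a, rfl⟩ | ⟨a, rfl⟩
  · -- s = Nset a, P ∈ Nset a means a ∉ I
    have ha : {Q : PriestleySpec L | a ∈ Q.1} ∉ f := hPs
    have : {Q : PriestleySpec L | a ∈ Q.1}ᶜ ∈ f := Ultrafilter.compl_mem_iff_notMem.2 ha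
    exact this
  · -- s = (Nset a)ᶜ, P ∈ it means a ∈ I
    have ha : {Q : PriestleySpec L | a ∈ Q.1} ∈ f := not_not.1 hPs
    convert ha using 1
    have e : (fun a => (Nset a)ᶜ) a = {Q : PriestleySpec L | a ∈ Q.1} := by
      ext Q; simp [Nset]
    exact Iff.of_eq (congrArg (· ∈ (f : Filter (PriestleySpec L))) e)

/-- Every open lower set is the union of the basic sets it contains. -/
lemma open_lower_eq_iUnion {U : Set (PriestleySpec L)} (hO : IsOpen U) (hL : IsLowerSet U) :
    U = ⋃ a ∈ {a : L | Nset a ⊆ U}, Nset a := by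
  refine Set.Subset.antisymm (fun P hP => ?_) (Set.iUnion₂_subset fun a ha => ha)
  have hch : ∀ Q : ↥Uᶜ, ∃ a : L, a ∈ (Q : PriestleySpec L).1 ∧ a ∉ P.1 := by
    intro Q
    by_contra h
    push_neg at h
    have hle : (Q : PriestleySpec L) ≤ P := h
    exact Q.2 (hL hle hP)
  choose g hg1 hg2 using hch
  have hcov : Uᶜ ⊆ ⋃ Q : ↥Uᶜ, (Nset (g Q))ᶜ := fun x hx =>
    Set.mem_iUnion.2 ⟨⟨x, hx⟩, not_not.2 (hg1 ⟨x, hx⟩)⟩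
  have hcpt : IsCompact (Uᶜ) := hO.isClosed_compl.isCompact
  obtain ⟨t, ht⟩ := hcpt.elim_finite_subcover (fun Q : ↥Uᶜ => (Nset (g Q))ᶜ)
    (fun Q => isOpen_Nset_compl _) hcov
  refine Set.mem_iUnion₂.2 ⟨t.inf g, ?_, ?_⟩
  · intro x hx
    by_contra hxU
    obtain ⟨Q, hQt, hQ⟩ := Set.mem_iUnion₂.1 (ht hxU)
    rw [Nset_finsetInf] at hx
    exact hQ (Set.mem_iInter₂.1 hx Q hQt)
  · rw [Nset_finsetInf]
    exact Set.mem_iInter₂.2 fun Q _ => hg2 Q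

/-- If `N_a` is contained in the union of `N_b` for `b ∈ I`, then `a ∈ I`. -/
lemma mem_of_Nset_subset {I : Order.Ideal L} {a : L}
    (h : Nset a ⊆ ⋃ b ∈ (I : Set L), Nset b) : a ∈ I := by
  by_contra ha
  have hdisj : Disjoint ((Order.PFilter.principal a : Order.PFilter L) : Set L)
      (I : Set L) := by
    rw [Set.disjoint_left]
    intro x hx hxI
    exact ha (I.lower (Order.PFilter.mem_principal.1 hx) hxI)
  obtain ⟨J, hJp, hIJ, hdis⟩ := DistribLattice.prime_ideal_of_disjoint_filter_ideal hdisj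
  have haJ : a ∉ J := fun hmem =>
    Set.disjoint_left.1 hdis (Order.PFilter.mem_principal.2 le_rfl) hmem
  obtain ⟨b, hbI, hb⟩ := Set.mem_iUnion₂.1 (h (show (⟨J, hJp⟩ : PriestleySpec L) ∈ Nset a from haJ))
  exact hb (hIJ hbI)

/-- The inverse map: an open lower set `U` yields the ideal `{a | N_a ⊆ U}`. -/
lemma psi_isIdeal (U : Set (PriestleySpec L)) : Order.IsIdeal {a : L | Nset a ⊆ U} := by
  refine ⟨fun a b hba hb => ?_, ⟨⊥, ?_⟩, fun a ha b hb => ?_⟩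
  · exact (Nset_subset_of_le hba).trans hb
  · simp only [Set.mem_setOf_eq, Nset_bot]; exact Set.empty_subset _
  · refine ⟨a ⊔ b, ?_, le_sup_left, le_sup_right⟩
    simp only [Set.mem_setOf_eq, Nset_sup]
    exact Set.union_subset ha hb

/-- The map `I ↦ ⋃_{a ∈ I} N_a` is an order isomorphism from the lattice of ideals of `L`
onto the lattice of open, downward closed subsets of the prime spectrum `X(L)`, with inverse
`U ↦ {a : N_a ⊆ U}`. -/
theorem ideal_orderIso_open_lowerSets (L : Type*) [DistribLattice L] [BoundedOrder L] :
    ∃ e : Order.Ideal L ≃o {U : Set (PriestleySpec L) // IsOpen U ∧ IsLowerSet U},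
      (∀ I : Order.Ideal L,
        (e I : Set (PriestleySpec L)) = ⋃ a ∈ (I : Set L), Nset a) ∧
      (∀ U : {U : Set (PriestleySpec L) // IsOpen U ∧ IsLowerSet U},
        ((e.symm U : Order.Ideal L) : Set L) =
          {a : L | Nset a ⊆ (U : Set (PriestleySpec L))}) := by
  classical
  set phi : Order.Ideal L → {U : Set (PriestleySpec L) // IsOpen U ∧ IsLowerSet U} :=
    fun I => ⟨⋃ a ∈ (I : Set L), Nset a,
      isOpen_biUnion fun a _ => isOpen_Nset a,
      isLowerSet_iUnion₂ fun a _ => isLowerSet_Nset a⟩ with hphi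
  set psi : {U : Set (PriestleySpec L) // IsOpen U ∧ IsLowerSet U} → Order.Ideal L :=
    fun U => (psi_isIdeal U.1).toIdeal with hpsi
  have hmempsi : ∀ U a, a ∈ psi U ↔ Nset a ⊆ (U : Set (PriestleySpec L)) := fun U a => Iff.rfl
  have hleft : ∀ I, psi (phi I) = I := by
    intro I
    apply SetLike.ext
    intro a
    rw [hmempsi]
    constructor
    · exact fun h => mem_of_Nset_subset h
    · exact fun h => Set.subset_iUnion₂ (s := fun b _ => Nset b) a h
  have hright : ∀ U, phi (psi U) = U := by
    intro U
    apply Subtype.ext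
    exact (open_lower_eq_iUnion U.2.1 U.2.2).symm
  have hmap : ∀ {I J : Order.Ideal L}, phi I ≤ phi J ↔ I ≤ J := by
    intro I J
    constructor
    · intro h a haI
      have hsub : Nset a ⊆ (phi J : Set (PriestleySpec L)) :=
        (Set.subset_iUnion₂ (s := fun b _ => Nset b) a haI).trans h
      exact mem_of_Nset_subset hsub
    · intro h
      exact Set.iUnion₂_mono' fun a ha => ⟨a, h ha, subset_rfl⟩
  exact ⟨{ toEquiv := ⟨phi, psi, hleft, hright⟩, map_rel_iff' := hmap },
    fun I => rfl, fun U => rfl⟩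
end

section
/- Let L be a lattice with least element ⊥. Suppose the map sending a lattice congruence s on L to the set {x ∈ L : s x ⊥} is a bijection between the lattice congruences on L and the ideals of L. Then L is distributive and sectionally complemented: for all a, b ∈ L with b ≤ a there exists c ∈ L with b ⊔ c = a and b ⊓ c = ⊥. -/
/-- A lattice congruence on a lattice `L`: an equivalence relation compatible with
joins and meets. -/
structure LatticeCongruence (L : Type*) [Lattice L] where
  r : L → L → Prop
  iseqv : Equivalence r
  sup_compat : ∀ a b c d : L, r a b → r c d → r (a ⊔ c) (b ⊔ d)
  inf_compat : ∀ a b c d : L, r a b → r c d → r (a ⊓ c) (b ⊓ d)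

namespace LatticeConAux

variable {L : Type*} [Lattice L] [OrderBot L]

/-- The intersection of two lattice congruences. -/
def inter (σ τ : LatticeCongruence L) : LatticeCongruence L where
  r x y := σ.r x y ∧ τ.r x y
  iseqv := ⟨fun x => ⟨σ.iseqv.refl x, τ.iseqv.refl x⟩,
    fun h => ⟨σ.iseqv.symm h.1, τ.iseqv.symm h.2⟩,
    fun h h' => ⟨σ.iseqv.trans h.1 h'.1, τ.iseqv.trans h.2 h'.2⟩⟩
  sup_compat a b c d h h' := ⟨σ.sup_compat a b c d h.1 h'.1, τ.sup_compat a b c d h.2 h'.2⟩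
  inf_compat a b c d h h' := ⟨σ.inf_compat a b c d h.1 h'.1, τ.inf_compat a b c d h.2 h'.2⟩

variable (F : LatticeCongruence L → Order.Ideal L)
  (hF : ∀ s : LatticeCongruence L, (F s : Set L) = {x : L | s.r x ⊥})

include hF

lemma mem_iff {s : LatticeCongruence L} {x : L} : x ∈ F s ↔ s.r x ⊥ := by
  rw [← SetLike.mem_coe, hF]; exact Iff.rfl

/-- If the `⊥`-class of `σ` is contained in that of `τ`, then `σ ⊆ τ`. -/
lemma mono (hinj : Function.Injective F) {σ τ : LatticeCongruence L}
    (h : ∀ x, σ.r x ⊥ → τ.r x ⊥) {x y : L} (hxy : σ.r x y) : τ.r x y := by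
  have hD : inter σ τ = σ := by
    apply hinj
    apply SetLike.coe_injective
    rw [hF, hF]
    ext z
    exact ⟨fun h' => h'.1, fun h' => ⟨h', h z h'⟩⟩
  have h2 : (inter σ τ).r x y := by rw [hD]; exact hxy
  exact h2.2

/-- The key lemma: if `σ.r p q` then `p ⊔ q ≤ (p ⊓ q) ⊔ k` for some `k` in the
`⊥`-class of `σ`. -/
lemma key (hbij : Function.Bijective F) (σ : LatticeCongruence L) {p q : L} (h : σ.r p q) :
    ∃ k, σ.r k ⊥ ∧ p ⊔ q ≤ (p ⊓ q) ⊔ k := by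
  have hmM : σ.r (p ⊓ q) (p ⊔ q) := by
    have h1 : σ.r (p ⊓ q) q := by simpa using σ.inf_compat p q q q h (σ.iseqv.refl q)
    have h2 : σ.r (p ⊔ q) q := by simpa using σ.sup_compat p q q q h (σ.iseqv.refl q)
    exact σ.iseqv.trans h1 (σ.iseqv.symm h2)
  set m := p ⊓ q with hm
  let I : Order.Ideal L :=
    { carrier := {z | ∃ k, σ.r k ⊥ ∧ z ≤ m ⊔ k}
      lower' := fun z z' hz hzk => by
        obtain ⟨k, hk, hle⟩ := hzk
        exact ⟨k, hk, hz.trans hle⟩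
      nonempty' := ⟨⊥, ⊥, σ.iseqv.refl ⊥, bot_le⟩
      directed' := by
        rintro x ⟨k, hk, hxk⟩ y ⟨k', hk', hyk⟩
        refine ⟨x ⊔ y, ⟨k ⊔ k', ?_, ?_⟩, le_sup_left, le_sup_right⟩
        · simpa using σ.sup_compat k ⊥ k' ⊥ hk hk'
        · exact sup_le (hxk.trans (sup_le_sup_left le_sup_left m))
            (hyk.trans (sup_le_sup_left le_sup_right m)) }
  obtain ⟨τ, hτ⟩ := hbij.2 I
  have hmemτ : ∀ z, τ.r z ⊥ ↔ ∃ k, σ.r k ⊥ ∧ z ≤ m ⊔ k := fun z => by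
    rw [← mem_iff F hF, hτ]; exact Iff.rfl
  have hστ : ∀ {x y : L}, σ.r x y → τ.r x y := fun hxy =>
    mono F hF hbij.1 (fun x hx => (hmemτ x).2 ⟨x, hx, le_sup_right⟩) hxy
  have h1 : τ.r m (p ⊔ q) := hστ hmM
  have h2 : τ.r m ⊥ := (hmemτ m).2 ⟨⊥, σ.iseqv.refl ⊥, le_sup_left⟩
  exact (hmemτ (p ⊔ q)).1 (τ.iseqv.trans (τ.iseqv.symm h1) h2)

end LatticeConAux

/-- If, in a lattice with least element, the map sending a lattice congruence to its
congruence class of `⊥` is a bijection onto the ideals of the lattice, then the lattice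
is distributive and sectionally complemented. -/
theorem distrib_and_sectionallyComplemented_of_con_ideal_bijection
    (L : Type*) [Lattice L] [OrderBot L]
    (F : LatticeCongruence L → Order.Ideal L)
    (hF : ∀ s : LatticeCongruence L, (F s : Set L) = {x : L | s.r x ⊥})
    (hbij : Function.Bijective F) :
    (∀ a b c : L, a ⊓ (b ⊔ c) = (a ⊓ b) ⊔ (a ⊓ c)) ∧
    (∀ a b : L, b ≤ a → ∃ c : L, b ⊔ c = a ∧ b ⊓ c = ⊥) := by
  have hdist : ∀ a b c : L, a ⊓ (b ⊔ c) = (a ⊓ b) ⊔ (a ⊓ c) := by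
    intro a b c
    obtain ⟨θa, hθa⟩ := hbij.2 (Order.Ideal.principal a)
    obtain ⟨θb, hθb⟩ := hbij.2 (Order.Ideal.principal b)
    obtain ⟨θc, hθc⟩ := hbij.2 (Order.Ideal.principal c)
    obtain ⟨θbc, hθbc⟩ := hbij.2 (Order.Ideal.principal (b ⊔ c))
    have hA : ∀ x, θa.r x ⊥ ↔ x ≤ a := fun x => by
      rw [← LatticeConAux.mem_iff F hF, hθa, Order.Ideal.mem_principal]
    have hB : ∀ x, θb.r x ⊥ ↔ x ≤ b := fun x => by
      rw [← LatticeConAux.mem_iff F hF, hθb, Order.Ideal.mem_principal]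
    have hCc : ∀ x, θc.r x ⊥ ↔ x ≤ c := fun x => by
      rw [← LatticeConAux.mem_iff F hF, hθc, Order.Ideal.mem_principal]
    have hBC : ∀ x, θbc.r x ⊥ ↔ x ≤ b ⊔ c := fun x => by
      rw [← LatticeConAux.mem_iff F hF, hθbc, Order.Ideal.mem_principal]
    set S : L → L → Prop := fun z z' => θb.r z z' ∨ θc.r z z' with hS
    have hSsymm : Symmetric S := fun z z' h =>
      h.elim (fun h => Or.inl (θb.iseqv.symm h)) (fun h => Or.inr (θc.iseqv.symm h))
    have hsupR : ∀ (t : L) (z z' : L), S z z' → S (z ⊔ t) (z' ⊔ t) := fun t z z' h =>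
      h.elim (fun h => Or.inl (θb.sup_compat z z' t t h (θb.iseqv.refl t)))
        (fun h => Or.inr (θc.sup_compat z z' t t h (θc.iseqv.refl t)))
    have hsupL : ∀ (t : L) (z z' : L), S z z' → S (t ⊔ z) (t ⊔ z') := fun t z z' h =>
      h.elim (fun h => Or.inl (θb.sup_compat t t z z' (θb.iseqv.refl t) h))
        (fun h => Or.inr (θc.sup_compat t t z z' (θc.iseqv.refl t) h))
    have hinfR : ∀ (t : L) (z z' : L), S z z' → S (z ⊓ t) (z' ⊓ t) := fun t z z' h =>
      h.elim (fun h => Or.inl (θb.inf_compat z z' t t h (θb.iseqv.refl t)))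
        (fun h => Or.inr (θc.inf_compat z z' t t h (θc.iseqv.refl t)))
    have hinfL : ∀ (t : L) (z z' : L), S z z' → S (t ⊓ z) (t ⊓ z') := fun t z z' h =>
      h.elim (fun h => Or.inl (θb.inf_compat t t z z' (θb.iseqv.refl t) h))
        (fun h => Or.inr (θc.inf_compat t t z z' (θc.iseqv.refl t) h))
    let C : LatticeCongruence L :=
      { r := Relation.ReflTransGen S
        iseqv := ⟨fun _ => Relation.ReflTransGen.refl,
          fun h => haveI : Std.Symm S := ⟨fun _ _ h => hSsymm h⟩; Std.Symm.symm _ _ h,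
          fun h h' => Relation.ReflTransGen.trans h h'⟩
        sup_compat := fun x y z t h h' =>
          Relation.ReflTransGen.trans
            (Relation.ReflTransGen.lift (p := S) (· ⊔ z) (fun p q hpq => hsupR z p q hpq) _ _ h)
            (Relation.ReflTransGen.lift (p := S) (y ⊔ ·) (fun p q hpq => hsupL y p q hpq) _ _ h')
        inf_compat := fun x y z t h h' =>
          Relation.ReflTransGen.trans
            (Relation.ReflTransGen.lift (p := S) (· ⊓ z) (fun p q hpq => hinfR z p q hpq) _ _ h)
            (Relation.ReflTransGen.lift (p := S) (y ⊓ ·) (fun p q hpq => hinfL y p q hpq) _ _ h') }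
    set w := a ⊓ (b ⊔ c) with hw
    set u := (a ⊓ b) ⊔ (a ⊓ c) with hu
    have hwa : θa.r w ⊥ := (hA w).2 inf_le_left
    have hwC : C.r w ⊥ := by
      refine LatticeConAux.mono F hF hbij.1 (σ := θbc) (τ := C) ?_ ((hBC w).2 inf_le_right)
      intro x hx
      have hx' : x ≤ b ⊔ c := (hBC x).1 hx
      have hb0 : C.r b ⊥ := Relation.ReflTransGen.single (Or.inl ((hB b).2 le_rfl))
      have hc0 : C.r c ⊥ := Relation.ReflTransGen.single (Or.inr ((hCc c).2 le_rfl))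
      have hbc0 : C.r (b ⊔ c) ⊥ := by simpa using C.sup_compat b ⊥ c ⊥ hb0 hc0
      have h2 := C.inf_compat x x (b ⊔ c) ⊥ (C.iseqv.refl x) hbc0
      simpa [inf_of_le_left hx'] using h2
    have hstep : ∀ z z', S z z' → z' ⊓ w ≤ u → z ⊓ w ≤ u := by
      intro z z' hzz' hle
      have hzw : θa.r (z ⊓ w) ⊥ := by
        simpa using θa.inf_compat z z w ⊥ (θa.iseqv.refl z) hwa
      have hz'w : θa.r (z' ⊓ w) ⊥ := by
        simpa using θa.inf_compat z' z' w ⊥ (θa.iseqv.refl z') hwa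
      have hpa : θa.r (z ⊓ w) (z' ⊓ w) := θa.iseqv.trans hzw (θa.iseqv.symm hz'w)
      rcases hzz' with hzz' | hzz'
      · have hpq : (LatticeConAux.inter θa θb).r (z ⊓ w) (z' ⊓ w) :=
          ⟨hpa, θb.inf_compat z z' w w hzz' (θb.iseqv.refl w)⟩
        obtain ⟨k, hk, hkle⟩ := LatticeConAux.key F hF hbij _ hpq
        have hka : k ≤ a := (hA k).1 hk.1
        have hkb : k ≤ b := (hB k).1 hk.2
        calc z ⊓ w ≤ (z ⊓ w) ⊔ (z' ⊓ w) := le_sup_left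
          _ ≤ ((z ⊓ w) ⊓ (z' ⊓ w)) ⊔ k := hkle
          _ ≤ u := sup_le (le_trans inf_le_right hle)
            (le_trans (le_inf hka hkb) le_sup_left)
      · have hpq : (LatticeConAux.inter θa θc).r (z ⊓ w) (z' ⊓ w) :=
          ⟨hpa, θc.inf_compat z z' w w hzz' (θc.iseqv.refl w)⟩
        obtain ⟨k, hk, hkle⟩ := LatticeConAux.key F hF hbij _ hpq
        have hka : k ≤ a := (hA k).1 hk.1
        have hkc : k ≤ c := (hCc k).1 hk.2
        calc z ⊓ w ≤ (z ⊓ w) ⊔ (z' ⊓ w) := le_sup_left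
          _ ≤ ((z ⊓ w) ⊓ (z' ⊓ w)) ⊔ k := hkle
          _ ≤ u := sup_le (le_trans inf_le_right hle)
            (le_trans (le_inf hka hkc) le_sup_right)
    have hww : w ⊓ w ≤ u := by
      refine Relation.ReflTransGen.head_induction_on
        (motive := fun z (_ : Relation.ReflTransGen S z ⊥) => z ⊓ w ≤ u) hwC ?_ ?_
      · simp
      · intro p q h' _ ih
        exact hstep p q h' ih
    exact le_antisymm (by simpa using hww) le_inf_sup
  refine ⟨hdist, ?_⟩
  intro a b hba
  let ρ : LatticeCongruence L :=
    { r := fun x y => x ⊓ b = y ⊓ b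
      iseqv := ⟨fun _ => rfl, Eq.symm, Eq.trans⟩
      sup_compat := fun x y z t h h' => by
        show (x ⊔ z) ⊓ b = (y ⊔ t) ⊓ b
        rw [inf_comm (x ⊔ z) b, hdist, inf_comm (y ⊔ t) b, hdist,
          inf_comm b x, inf_comm b y, inf_comm b z, inf_comm b t, h, h']
      inf_compat := fun x y z t h h' => by
        show (x ⊓ z) ⊓ b = (y ⊓ t) ⊓ b
        rw [inf_inf_distrib_right, inf_inf_distrib_right y, h, h'] }
  let K : Order.Ideal L :=
    { carrier := {x | ∃ j, j ⊓ b = ⊥ ∧ x ≤ b ⊔ j}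
      lower' := fun x x' hx hxk => by
        obtain ⟨j, hj, hle⟩ := hxk
        exact ⟨j, hj, hx.trans hle⟩
      nonempty' := ⟨⊥, ⊥, by simp, bot_le⟩
      directed' := by
        rintro x ⟨j, hj, hxj⟩ y ⟨j', hj', hyj⟩
        refine ⟨x ⊔ y, ⟨j ⊔ j', ?_, ?_⟩, le_sup_left, le_sup_right⟩
        · rw [inf_comm, hdist, inf_comm b j, inf_comm b j', hj, hj', sup_idem]
        · exact sup_le (hxj.trans (sup_le_sup_left le_sup_left b))
            (hyj.trans (sup_le_sup_left le_sup_right b)) }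
  obtain ⟨τ, hτ⟩ := hbij.2 K
  have hmem : ∀ x, τ.r x ⊥ ↔ ∃ j, j ⊓ b = ⊥ ∧ x ≤ b ⊔ j := fun x => by
    rw [← LatticeConAux.mem_iff F hF, hτ]; exact Iff.rfl
  have hρτ : ∀ {x y : L}, ρ.r x y → τ.r x y := fun hxy =>
    LatticeConAux.mono F hF hbij.1
      (fun x hx => (hmem x).2 ⟨x, by have hx' : x ⊓ b = ⊥ ⊓ b := hx; simpa using hx', le_sup_right⟩) hxy
  have hab : ρ.r a b := by
    show a ⊓ b = b ⊓ b
    rw [inf_idem, inf_eq_right.2 hba]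
  have hb0 : τ.r b ⊥ := (hmem b).2 ⟨⊥, by simp, by simp⟩
  have ha0 : τ.r a ⊥ := τ.iseqv.trans (hρτ hab) hb0
  obtain ⟨j, hj, haj⟩ := (hmem a).1 ha0
  refine ⟨j ⊓ a, ?_, ?_⟩
  · refine le_antisymm (sup_le hba inf_le_right) ?_
    have h1 : a = (a ⊓ b) ⊔ (a ⊓ j) := by rw [← hdist]; exact (inf_eq_left.2 haj).symm
    calc a = (a ⊓ b) ⊔ (a ⊓ j) := h1
      _ ≤ b ⊔ (j ⊓ a) := sup_le (le_sup_of_le_left inf_le_right)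
        (le_sup_of_le_right (by rw [inf_comm]))
  · refine le_antisymm ?_ bot_le
    calc b ⊓ (j ⊓ a) ≤ b ⊓ j := inf_le_inf_left b inf_le_left
      _ = ⊥ := by rw [inf_comm]; exact hj
end

section
/- Let L be a bounded distributive lattice. Then its prime spectrum X(L) with the Priestley topology, ordered by inclusion of prime ideals, is a compact Priestley space: it is compact, and for any prime ideals P, Q with P ⊄ Q there is a clopen upward closed subset of X(L) containing P but not Q. -/
variable {L : Type*} [DistribLattice L] [BoundedOrder L]

lemma mem_compl_Nset {a : L} {P : PriestleySpec L} : P ∈ (Nset a)ᶜ ↔ a ∈ P.1 := by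
  simp [Nset]

/-- The prime spectrum of a bounded distributive lattice, with the Priestley topology and
ordered by inclusion, is a compact Priestley space: it is compact, and any two prime ideals
`P ⊄ Q` are separated by a clopen upward closed set containing `P` but not `Q`. -/
theorem priestleySpec_compactSpace_and_priestley_separation
    (L : Type*) [DistribLattice L] [BoundedOrder L] :
    CompactSpace (PriestleySpec L) ∧
      ∀ P Q : PriestleySpec L, ¬ P ≤ Q →
        ∃ U : Set (PriestleySpec L), IsClopen U ∧ IsUpperSet U ∧ P ∈ U ∧ Q ∉ U := by
  constructor
  · -- compactness, via ultrafilters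
    rw [← isCompact_univ_iff, isCompact_iff_ultrafilter_le_nhds]
    intro F _
    -- the candidate limit: the set of `a` whose "membership set" lies in `F`
    set S : Set L := {a | (Nset a)ᶜ ∈ F} with hS
    have hmemS : ∀ a : L, a ∈ S ↔ {R : PriestleySpec L | a ∈ R.1} ∈ F := by
      intro a
      have : (Nset a)ᶜ = {R : PriestleySpec L | a ∈ R.1} := by
        ext R; exact mem_compl_Nset
      simp [hS, this]
    have hbotS : (⊥ : L) ∈ S := by
      rw [hmemS]
      have : {R : PriestleySpec L | (⊥ : L) ∈ R.1} = Set.univ := by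
        ext R; simp [R.1.bot_mem]
      rw [this]; exact Filter.univ_mem
    have hlower : IsLowerSet S := by
      intro b a hab hb
      rw [hmemS] at hb ⊢
      exact Filter.mem_of_superset hb fun R hR => R.1.lower hab hR
    have hsup : ∀ a b, a ∈ S → b ∈ S → a ⊔ b ∈ S := by
      intro a b ha hb
      rw [hmemS] at ha hb ⊢
      exact Filter.mem_of_superset (Filter.inter_mem ha hb)
        fun R hR => Order.Ideal.sup_mem hR.1 hR.2
    have htopS : (⊤ : L) ∉ S := by
      rw [hmemS]
      have : {R : PriestleySpec L | (⊤ : L) ∈ R.1} = ∅ := by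
        ext R; simp [R.2.top_notMem]
      rw [this]; exact F.empty_notMem
    have hprimeS : ∀ a b : L, a ⊓ b ∈ S → a ∈ S ∨ b ∈ S := by
      intro a b hab
      rw [hmemS] at hab
      rw [hmemS, hmemS]
      have hsub : {R : PriestleySpec L | a ⊓ b ∈ R.1} ⊆
          {R : PriestleySpec L | a ∈ R.1} ∪ {R : PriestleySpec L | b ∈ R.1} :=
        fun R hR => R.2.mem_or_mem hR
      exact Ultrafilter.union_mem_iff.mp (Filter.mem_of_superset hab hsub)
    -- assemble the prime ideal
    let I : Order.Ideal L :=
      { carrier := S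
        lower' := hlower
        nonempty' := ⟨⊥, hbotS⟩
        directed' := fun a ha b hb =>
          ⟨a ⊔ b, hsup a b ha hb, le_sup_left, le_sup_right⟩ }
    have hmemI : ∀ a : L, a ∈ I ↔ a ∈ S := fun a => Iff.rfl
    haveI hproper : I.IsProper := Order.Ideal.isProper_of_notMem
      (show (⊤ : L) ∉ I from htopS)
    have hIprime : I.IsPrime :=
      Order.Ideal.IsPrime.of_mem_or_mem (fun {a b} h => hprimeS a b h)
    refine ⟨⟨I, hIprime⟩, Set.mem_univ _, ?_⟩
    -- convergence: every subbasic open set containing the limit is in `F`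
    show (F : Filter (PriestleySpec L)) ≤
      @nhds (PriestleySpec L) (TopologicalSpace.generateFrom _) (⟨I, hIprime⟩ : PriestleySpec L)
    erw [TopologicalSpace.nhds_generateFrom]
    simp only [le_iInf_iff, Set.mem_setOf_eq, Filter.le_principal_iff]
    rintro s ⟨hPs, (⟨a, rfl⟩ | ⟨a, rfl⟩)⟩
    · -- s = Nset a, and a ∉ I, i.e. (Nset a)ᶜ ∉ F
      have : a ∉ S := hPs
      rw [hS, Set.mem_setOf_eq] at this
      exact Ultrafilter.compl_notMem_iff.mp this
    · -- s = (Nset a)ᶜ, and a ∈ I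
      have : a ∈ S := mem_compl_Nset.mp hPs
      exact this
  · -- Priestley separation
    intro P Q hPQ
    obtain ⟨a, haP, haQ⟩ : ∃ a : L, a ∈ P.1 ∧ a ∉ Q.1 := by
      by_contra h
      push_neg at h
      exact hPQ fun a ha => h a ha
    refine ⟨(Nset a)ᶜ, ⟨?_, ?_⟩, ?_, mem_compl_Nset.mpr haP,
      fun h => haQ (mem_compl_Nset.mp h)⟩
    · -- closed
      rw [isClosed_compl_iff]
      exact TopologicalSpace.GenerateOpen.basic _ (Or.inl ⟨a, rfl⟩)
    · -- open
      exact TopologicalSpace.GenerateOpen.basic _ (Or.inr ⟨a, rfl⟩)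
    · -- upper set
      intro R R' hRR' hR
      exact mem_compl_Nset.mpr (hRR' (mem_compl_Nset.mp hR))
end

section
/- Let A be a Boolean algebra and St(A) its Stone space. Then the evaluation map η : A → (St(A) → Bool) defined by η(a)(f) = f(a) satisfies: each η(a) is continuous; η is injective; η preserves ⊥, ⊤, binary joins, binary meets and complements (computed pointwise in Bool); and every continuous function g : St(A) → Bool equals η(a) for some a ∈ A. Hence A is isomorphic to the Boolean algebra of continuous Bool-valued functions on St(A) with pointwise operations. -/
/-- The Stone space of a Boolean algebra `A`: the set of bounded lattice homomorphisms
from `A` to `Bool` (which automatically preserve complements). -/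
abbrev StoneSpace (A : Type*) [BooleanAlgebra A] := BoundedLatticeHom A Bool

/-- The Stone space is topologized as a subspace of the product space `A → Bool`,
where `Bool` carries the discrete topology. -/
noncomputable instance (A : Type*) [BooleanAlgebra A] : TopologicalSpace (StoneSpace A) :=
  TopologicalSpace.induced (fun f : StoneSpace A => (f : A → Bool)) inferInstance

/-- The evaluation map `η : A → (St(A) → Bool)`, `η(a)(f) = f(a)`. -/
noncomputable def stoneEval (A : Type*) [BooleanAlgebra A] (a : A) : StoneSpace A → Bool :=
  fun f => f a

section Aux

variable {A : Type*} [BooleanAlgebra A]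

open scoped Classical in
/-- The Bool-valued hom associated to a prime ideal. -/
noncomputable def homOfPrime (J : Order.Ideal A) (hJ : J.IsPrime) : BoundedLatticeHom A Bool where
  toFun x := decide (x ∉ J)
  map_sup' a b := by
    by_cases ha : a ∈ J <;> by_cases hb : b ∈ J
    · simp [ha, hb, J.sup_mem ha hb]
    · simp [ha, hb, fun h => hb (J.lower le_sup_right h)]
    · simp [ha, hb, fun h => ha (J.lower le_sup_left h)]
    · simp [ha, hb, fun h => ha (J.lower le_sup_left h)]
  map_inf' a b := by
    by_cases ha : a ∈ J <;> by_cases hb : b ∈ J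
    · have hab : a ⊓ b ∈ J := J.lower inf_le_left ha
      simp [ha, hb, hab]
    · have hab : a ⊓ b ∈ J := J.lower inf_le_left ha
      simp [ha, hb, hab]
    · have hab : a ⊓ b ∈ J := J.lower inf_le_right hb
      simp [ha, hb, hab]
    · have hab : a ⊓ b ∉ J := fun h => (hJ.mem_or_mem h).elim ha hb
      simp [ha, hb, hab]
  map_top' := by simp [hJ.toIsProper.top_notMem]
  map_bot' := by simp [J.bot_mem]

theorem exists_hom_of_not_le {a b : A} (hab : ¬ a ≤ b) :
    ∃ f : StoneSpace A, f a = true ∧ f b = false := by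
  classical
  have hd : Disjoint (↑(Order.PFilter.principal a) : Set A)
      (↑(Order.Ideal.principal b) : Set A) := by
    rw [Set.disjoint_left]
    intro x hx hx'
    exact hab (le_trans (Order.PFilter.mem_principal.1 hx) (Order.Ideal.mem_principal.1 hx'))
  obtain ⟨J, hJp, hIJ, hdisj⟩ := DistribLattice.prime_ideal_of_disjoint_filter_ideal hd
  refine ⟨homOfPrime J hJp, ?_, ?_⟩
  · have : a ∉ J := Set.disjoint_left.1 hdisj (Order.PFilter.mem_principal.2 le_rfl)
    simp [homOfPrime, this]
  · have : b ∈ J := hIJ Order.Ideal.mem_principal_self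
    simp [homOfPrime, this]

theorem continuous_stoneEval (a : A) : Continuous (stoneEval A a) :=
  (continuous_apply a).comp continuous_induced_dom

theorem isClosedEmbedding_coe :
    Topology.IsClosedEmbedding (fun f : StoneSpace A => (f : A → Bool)) := by
  refine ⟨⟨⟨rfl⟩, fun f g h => DFunLike.coe_injective h⟩, ?_⟩
  have : Set.range (fun f : StoneSpace A => (f : A → Bool)) =
      {g : A → Bool | g ⊥ = ⊥} ∩ {g | g ⊤ = ⊤} ∩
      ⋂ (a : A) (b : A), ({g : A → Bool | g (a ⊔ b) = g a ⊔ g b} ∩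
        {g | g (a ⊓ b) = g a ⊓ g b}) := by
    ext g
    simp only [Set.mem_range, Set.mem_inter_iff, Set.mem_iInter, Set.mem_setOf_eq]
    constructor
    · rintro ⟨f, rfl⟩
      exact ⟨⟨map_bot f, map_top f⟩, fun a b => ⟨map_sup f a b, map_inf f a b⟩⟩
    · rintro ⟨⟨hbot, htop⟩, hab⟩
      exact ⟨⟨⟨⟨g, fun a b => (hab a b).1⟩, fun a b => (hab a b).2⟩, htop, hbot⟩, rfl⟩
  rw [this]
  refine IsClosed.inter (IsClosed.inter ?_ ?_) (isClosed_iInter fun a => isClosed_iInter fun b =>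
    IsClosed.inter ?_ ?_)
  · exact isClosed_eq (continuous_apply _) continuous_const
  · exact isClosed_eq (continuous_apply _) continuous_const
  · refine isClosed_eq (continuous_apply _) ?_
    have hc : Continuous (fun x : A → Bool => (x a, x b)) :=
      (continuous_apply a).prodMk (continuous_apply b)
    have hd : Continuous ((fun p : Bool × Bool => p.1 ⊔ p.2) ∘ fun x : A → Bool => (x a, x b)) :=
      continuous_of_discreteTopology.comp hc
    exact hd
  · refine isClosed_eq (continuous_apply _) ?_
    have hc : Continuous (fun x : A → Bool => (x a, x b)) :=
      (continuous_apply a).prodMk (continuous_apply b)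
    have hd : Continuous ((fun p : Bool × Bool => p.1 ⊓ p.2) ∘ fun x : A → Bool => (x a, x b)) :=
      continuous_of_discreteTopology.comp hc
    exact hd

instance : CompactSpace (StoneSpace A) := isClosedEmbedding_coe.compactSpace

theorem stoneEval_surj (g : StoneSpace A → Bool) (hg : Continuous g) :
    ∃ a : A, g = stoneEval A a := by
  classical
  set U : Set (StoneSpace A) := g ⁻¹' {true} with hU
  have hUopen : IsOpen U := (isOpen_discrete _).preimage hg
  have hUclosed : IsClosed U := (isClosed_discrete _).preimage hg
  have key : ∀ f ∈ U, ∃ a : A, f a = true ∧ ∀ h : StoneSpace A, h a = true → h ∈ U := by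
    intro f hf
    obtain ⟨V, hV, hUV⟩ := isOpen_induced_iff.1 hUopen
    have hfV : (f : A → Bool) ∈ V := by rw [← hUV] at hf; exact hf
    obtain ⟨I, u, hu, hsub⟩ := isOpen_pi_iff.1 hV _ hfV
    refine ⟨I.inf (fun i => if f i = true then i else iᶜ), ?_, ?_⟩
    · rw [map_finset_inf, show (true : Bool) = ⊤ from rfl, Finset.inf_eq_top_iff]
      intro i hi
      by_cases hfi : f i = true
      · simp [Function.comp, hfi]
      · simp only [Bool.not_eq_true] at hfi
        simp [Function.comp, hfi, map_compl']
    · intro h hh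
      rw [map_finset_inf, show (true : Bool) = ⊤ from rfl, Finset.inf_eq_top_iff] at hh
      have hmem : (h : A → Bool) ∈ (↑I : Set A).pi u := by
        intro i hi
        have := hh i hi
        have h2 : h i = f i := by
          by_cases hfi : f i = true
          · simp only [Function.comp, hfi] at this ⊢
            simpa using this
          · simp only [Bool.not_eq_true] at hfi
            have h3 : h iᶜ = true := by simpa [Function.comp, hfi] using this
            rw [map_compl'] at h3
            rw [hfi]
            cases hhi : h i
            · rfl
            · rw [hhi] at h3; simp at h3
        rw [h2]
        exact (hu i hi).2
      have : (h : A → Bool) ∈ V := hsub hmem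
      rw [← hUV]
      exact this
  choose! a ha1 ha2 using key
  have hcover : U ⊆ ⋃ f ∈ U, (stoneEval A (a f)) ⁻¹' {true} := by
    intro f hf
    exact Set.mem_biUnion hf (by simpa [stoneEval] using ha1 f hf)
  obtain ⟨t, hts, htfin, htcover⟩ := hUclosed.isCompact.elim_finite_subcover_image
    (fun f _ => (isOpen_discrete _).preimage (continuous_stoneEval (a f))) hcover
  refine ⟨htfin.toFinset.sup a, ?_⟩
  funext h
  have hsup : h (htfin.toFinset.sup a) = htfin.toFinset.sup (fun f => h (a f)) :=
    map_finset_sup _ _ _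
  by_cases hh : h ∈ U
  · obtain ⟨f, hf, hhf⟩ := Set.mem_iUnion₂.1 (htcover hh)
    have h1 : h (a f) = true := by simpa [stoneEval] using hhf
    have h2 : h (a f) ≤ h (htfin.toFinset.sup a) := by
      rw [hsup]
      exact Finset.le_sup (f := fun f => h (a f)) (htfin.mem_toFinset.2 hf)
    have h3 : h (htfin.toFinset.sup a) = true := by
      rw [h1] at h2
      exact top_le_iff.1 h2
    have h4 : g h = true := hh
    simp [stoneEval, h3, h4]
  · have h4 : g h = false := by
      simp only [hU, Set.mem_preimage, Set.mem_singleton_iff] at hh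
      simpa using hh
    have h3 : h (htfin.toFinset.sup a) = false := by
      rw [hsup]
      have hbot : htfin.toFinset.sup (fun f => h (a f)) = ⊥ := by
        rw [Finset.sup_eq_bot_iff]
        intro f hf
        by_contra hne
        have htr : h (a f) = true := by
          cases hha : h (a f)
          · exact absurd hha hne
          · rfl
        exact hh (ha2 f (hts (htfin.mem_toFinset.1 hf)) h htr)
      exact hbot
    simp [stoneEval, h3, h4]

end Aux

/-- Stone representation: each `η(a)` is continuous, `η` is injective, `η` preserves
`⊥`, `⊤`, binary joins, binary meets and complements (pointwise in `Bool`), and every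
continuous `Bool`-valued function on the Stone space is of the form `η(a)`. Hence `A` is
isomorphic to the Boolean algebra of continuous `Bool`-valued functions on `St(A)`. -/
theorem stone_representation (A : Type*) [BooleanAlgebra A] :
    (∀ a : A, Continuous (stoneEval A a)) ∧
    Function.Injective (stoneEval A) ∧
    (stoneEval A ⊥ = fun _ => (⊥ : Bool)) ∧
    (stoneEval A ⊤ = fun _ => (⊤ : Bool)) ∧
    (∀ a b : A, stoneEval A (a ⊔ b) = fun f => stoneEval A a f ⊔ stoneEval A b f) ∧
    (∀ a b : A, stoneEval A (a ⊓ b) = fun f => stoneEval A a f ⊓ stoneEval A b f) ∧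
    (∀ a : A, stoneEval A aᶜ = fun f => (stoneEval A a f)ᶜ) ∧
    (∀ g : StoneSpace A → Bool, Continuous g → ∃ a : A, g = stoneEval A a) := by
  refine ⟨fun a => continuous_stoneEval a, ?_, ?_, ?_, ?_, ?_, ?_, ?_⟩
  · intro a b h
    by_contra hne
    have : ¬ a ≤ b ∨ ¬ b ≤ a := by
      by_contra hc
      push_neg at hc
      exact hne (le_antisymm hc.1 hc.2)
    rcases this with hab | hba
    · obtain ⟨f, hfa, hfb⟩ := exists_hom_of_not_le hab
      have := congrFun h f
      simp only [stoneEval] at this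
      rw [hfa, hfb] at this
      exact Bool.noConfusion this
    · obtain ⟨f, hfb, hfa⟩ := exists_hom_of_not_le hba
      have := congrFun h f
      simp only [stoneEval] at this
      rw [hfa, hfb] at this
      exact Bool.noConfusion this
  · funext f; exact map_bot f
  · funext f; exact map_top f
  · intro a b; funext f; exact map_sup f a b
  · intro a b; funext f; exact map_inf f a b
  · intro a; funext f; exact map_compl' f a
  · exact fun g hg => stoneEval_surj g hg
end

section
/- The two-element Boolean algebra Bool is a coseparator for Boolean algebras: for any Boolean algebra A and any a, b ∈ A with a ≠ b, there exists a bounded lattice homomorphism f : A → Bool with f(a) ≠ f(b). -/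
open Order

private lemma bool_cosep_aux {A : Type*} [BooleanAlgebra A] {a b : A} (h : ¬ a ≤ b) :
    ∃ f : BoundedLatticeHom A Bool, f a ≠ f b := by
  have hdisj : Disjoint ((PFilter.principal a : PFilter A) : Set A)
      ((Ideal.principal b : Ideal A) : Set A) := by
    rw [Set.disjoint_left]
    intro x hx hx'
    exact h (le_trans (PFilter.mem_principal.mp hx) (Ideal.mem_principal.mp hx'))
  obtain ⟨J, hJprime, hIJ, hFJ⟩ :=
    DistribLattice.prime_ideal_of_disjoint_filter_ideal hdisj
  have haJ : a ∉ J := Set.disjoint_left.mp hFJ (PFilter.mem_principal.mpr le_rfl)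
  have hbJ : b ∈ J := hIJ (Ideal.mem_principal.mpr le_rfl)
  classical
  refine ⟨⟨⟨⟨fun x => decide (x ∉ J), ?_⟩, ?_⟩, ?_, ?_⟩, ?_⟩
  · intro x y
    have key : x ⊔ y ∈ J ↔ x ∈ J ∧ y ∈ J :=
      ⟨fun h => ⟨J.lower le_sup_left h, J.lower le_sup_right h⟩,
       fun h => J.sup_mem h.1 h.2⟩
    by_cases hx : x ∈ J <;> by_cases hy : y ∈ J <;>
      simp [key, hx, hy]
  · intro x y
    have key : x ⊓ y ∈ J ↔ x ∈ J ∨ y ∈ J :=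
      ⟨fun h => hJprime.mem_or_mem h,
       fun h => h.elim (fun h => J.lower inf_le_left h) (fun h => J.lower inf_le_right h)⟩
    by_cases hx : x ∈ J <;> by_cases hy : y ∈ J <;>
      simp [key, hx, hy]
  · have : (⊤ : A) ∉ J := fun hT => haJ (J.lower le_top hT)
    simp [this]
  · simp [J.bot_mem]
  · simp only [BoundedLatticeHom.coe_mk, LatticeHom.coe_mk, SupHom.coe_mk]
    simp [haJ, hbJ]

/-- The two-element Boolean algebra `Bool` is a coseparator for Boolean algebras:
distinct elements of a Boolean algebra are separated by a bounded lattice homomorphism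
into `Bool`. -/
theorem bool_coseparator (A : Type*) [BooleanAlgebra A] (a b : A) (hab : a ≠ b) :
    ∃ f : BoundedLatticeHom A Bool, f a ≠ f b := by
  rcases not_and_or.mp (fun h : a ≤ b ∧ b ≤ a => hab (le_antisymm h.1 h.2)) with h | h
  · exact bool_cosep_aux h
  · obtain ⟨f, hf⟩ := bool_cosep_aux h
    exact ⟨f, hf.symm⟩
end

section
/- In the category of Boolean algebras (with bounded lattice homomorphisms as morphisms), every epimorphism is surjective; that is, a morphism f : A → B in BoolAlg is an epimorphism if and only if the underlying map is surjective. -/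
open CategoryTheory

section ULiftProp

noncomputable instance : Top (ULift.{u} Prop) := ⟨⟨⊤⟩⟩
noncomputable instance : Bot (ULift.{u} Prop) := ⟨⟨⊥⟩⟩
noncomputable instance : HImp (ULift.{u} Prop) := ⟨fun a b => ⟨a.down ⇨ b.down⟩⟩

noncomputable instance : BooleanAlgebra (ULift.{u} Prop) :=
  Function.Injective.booleanAlgebra ULift.down
    (fun a b h => by cases a; cases b; cases h; rfl)
    Iff.rfl Iff.rfl (fun _ _ => rfl) (fun _ _ => rfl) rfl rfl (fun _ => rfl) (fun _ _ => rfl) (fun _ _ => rfl)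

end ULiftProp

section Filters

variable {α : Type*} [BooleanAlgebra α]

/-- `F` is a proper filter relative to the set `S`. -/
def IsRF (S F : Set α) : Prop :=
  F ⊆ S ∧ ⊤ ∈ F ∧ (∀ x ∈ F, ∀ y ∈ F, x ⊓ y ∈ F) ∧
    (∀ x ∈ F, ∀ y ∈ S, x ≤ y → y ∈ F) ∧ ⊥ ∉ F

lemma rf_exists_max (S F₀ : Set α) (h : IsRF S F₀) :
    ∃ M, F₀ ⊆ M ∧ IsRF S M ∧ ∀ F, IsRF S F → M ⊆ F → F ⊆ M := by
  have hz : ∀ c ⊆ {F | IsRF S F ∧ F₀ ⊆ F}, IsChain (· ⊆ ·) c → c.Nonempty →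
      ∃ ub ∈ {F | IsRF S F ∧ F₀ ⊆ F}, ∀ s ∈ c, s ⊆ ub := by
    rintro c hc hchain ⟨F, hF⟩
    refine ⟨⋃₀ c, ⟨⟨Set.sUnion_subset fun G hG => (hc hG).1.1,
      ⟨F, hF, (hc hF).1.2.1⟩, ?_, ?_, ?_⟩, (hc hF).2.trans (Set.subset_sUnion_of_mem hF)⟩,
      fun G hG => Set.subset_sUnion_of_mem hG⟩
    · rintro x ⟨F₁, hF₁, hx⟩ y ⟨F₂, hF₂, hy⟩
      rcases hchain.total hF₁ hF₂ with h12 | h21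
      · exact ⟨F₂, hF₂, (hc hF₂).1.2.2.1 x (h12 hx) y hy⟩
      · exact ⟨F₁, hF₁, (hc hF₁).1.2.2.1 x hx y (h21 hy)⟩
    · rintro x ⟨F₁, hF₁, hx⟩ y hy hxy
      exact ⟨F₁, hF₁, (hc hF₁).1.2.2.2.1 x hx y hy hxy⟩
    · rintro ⟨F₁, hF₁, hx⟩
      exact (hc hF₁).1.2.2.2.2 hx
  obtain ⟨M, hsub, hmem, hmax⟩ := zorn_subset_nonempty _ hz F₀ ⟨h, subset_rfl⟩
  exact ⟨M, hsub, hmem.1, fun F hF hMF => hmax ⟨hF, hsub.trans hMF⟩ hMF⟩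

lemma rf_max_mem_or_compl {S M : Set α} (hSi : ∀ x ∈ S, ∀ y ∈ S, x ⊓ y ∈ S)
    (hSc : ∀ x ∈ S, xᶜ ∈ S) (hM : IsRF S M)
    (hmax : ∀ F, IsRF S F → M ⊆ F → F ⊆ M) {x : α} (hx : x ∈ S) :
    x ∈ M ∨ xᶜ ∈ M := by
  obtain ⟨hMS, htop, hinf, hup, hbot⟩ := hM
  by_cases hxM : x ∈ M
  · exact Or.inl hxM
  right
  by_cases hb : ∃ m ∈ M, m ⊓ x = ⊥
  · obtain ⟨m, hm, hmx⟩ := hb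
    have : m ≤ xᶜ := le_compl_iff_disjoint_right.2 (disjoint_iff.2 hmx)
    exact hup m hm xᶜ (hSc x hx) this
  · push_neg at hb
    exfalso
    apply hxM
    set F : Set α := {z | z ∈ S ∧ ∃ m ∈ M, m ⊓ x ≤ z} with hF
    have hFrf : IsRF S F := by
      refine ⟨fun z hz => hz.1, ⟨hMS htop, ⊤, htop, inf_le_right.trans le_top⟩, ?_, ?_, ?_⟩
      · rintro z₁ ⟨hz₁S, m₁, hm₁, hle₁⟩ z₂ ⟨hz₂S, m₂, hm₂, hle₂⟩
        refine ⟨hSi z₁ hz₁S z₂ hz₂S, m₁ ⊓ m₂, hinf m₁ hm₁ m₂ hm₂, ?_⟩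
        exact le_inf ((inf_le_inf_right x inf_le_left).trans hle₁)
          ((inf_le_inf_right x inf_le_right).trans hle₂)
      · rintro z ⟨hzS, m, hm, hle⟩ y hy hzy
        exact ⟨hy, m, hm, hle.trans hzy⟩
      · rintro ⟨-, m, hm, hle⟩
        exact hb m hm (le_bot_iff.1 hle)
    have hMF : M ⊆ F := fun m hm => ⟨hMS hm, m, hm, inf_le_left⟩
    exact hmax F hFrf hMF ⟨hx, ⊤, htop, by simp⟩

lemma rf_max_sup_mem {M : Set α} (hM : IsRF (Set.univ : Set α) M)
    (hmax : ∀ F, IsRF (Set.univ : Set α) F → M ⊆ F → F ⊆ M) {x y : α} :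
    x ⊔ y ∈ M ↔ x ∈ M ∨ y ∈ M := by
  obtain ⟨hMS, htop, hinf, hup, hbot⟩ := hM
  constructor
  · intro hxy
    by_contra hcon
    push_neg at hcon
    have hx := (rf_max_mem_or_compl (fun x _ y _ => Set.mem_univ _) (fun x _ => Set.mem_univ _)
      ⟨hMS, htop, hinf, hup, hbot⟩ hmax (Set.mem_univ x)).resolve_left hcon.1
    have hy := (rf_max_mem_or_compl (fun x _ y _ => Set.mem_univ _) (fun x _ => Set.mem_univ _)
      ⟨hMS, htop, hinf, hup, hbot⟩ hmax (Set.mem_univ y)).resolve_left hcon.2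
    have h1 : xᶜ ⊓ yᶜ ∈ M := hinf _ hx _ hy
    have h2 : (x ⊔ y) ⊓ (xᶜ ⊓ yᶜ) ∈ M := hinf _ hxy _ h1
    rw [show (x ⊔ y) ⊓ (xᶜ ⊓ yᶜ) = ⊥ by rw [← compl_sup]; exact inf_compl_eq_bot] at h2
    exact hbot h2
  · rintro (hx | hy)
    · exact hup x hx _ trivial le_sup_left
    · exact hup y hy _ trivial le_sup_right

end Filters

/-- In the category `BoolAlg` of Boolean algebras (with bounded lattice homomorphisms),
a morphism is an epimorphism if and only if its underlying map is surjective. -/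
theorem boolAlg_epi_iff_surjective {A B : BoolAlg} (f : A ⟶ B) :
    Epi f ↔ Function.Surjective (show BoundedLatticeHom A B from f.hom) := by
  constructor
  · intro hepi
    by_contra hsurj
    classical
    simp only [Function.Surjective, not_forall] at hsurj
    obtain ⟨b, hb⟩ := hsurj
    set φ : BoundedLatticeHom A B := f.hom with hφ
    set S : Set B := Set.range φ with hS
    have hbS : b ∉ S := by
      rintro ⟨a, ha⟩
      exact hb ⟨a, ha⟩
    have hStop : (⊤ : B) ∈ S := ⟨⊤, map_top φ⟩
    have hSbot : (⊥ : B) ∈ S := ⟨⊥, map_bot φ⟩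
    have hSinf : ∀ x ∈ S, ∀ y ∈ S, x ⊓ y ∈ S := by
      rintro x ⟨a₁, rfl⟩ y ⟨a₂, rfl⟩
      exact ⟨a₁ ⊓ a₂, map_inf φ a₁ a₂⟩
    have hSsup : ∀ x ∈ S, ∀ y ∈ S, x ⊔ y ∈ S := by
      rintro x ⟨a₁, rfl⟩ y ⟨a₂, rfl⟩
      exact ⟨a₁ ⊔ a₂, map_sup φ a₁ a₂⟩
    have hScompl : ∀ x ∈ S, xᶜ ∈ S := by
      rintro x ⟨a, rfl⟩
      exact ⟨aᶜ, map_compl' φ a⟩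
    set T : Set B := {s | s ∈ S ∧ (s ≤ b ∨ s ≤ bᶜ)} with hT
    by_cases hfin : ∃ t : Finset B, ↑t ⊆ T ∧ t.sup id = ⊤
    · -- compactness cover: then b is a finite join of elements of S, contradiction
      obtain ⟨t, htT, htsup⟩ := hfin
      set u : B := (t.filter (· ≤ b)).sup id with hu
      have hub : u ≤ b := Finset.sup_le fun x hx => (Finset.mem_filter.1 hx).2
      have hcov : t.sup id ≤ u ⊔ bᶜ := by
        refine Finset.sup_le fun x hx => ?_
        by_cases hxb : x ≤ b
        · exact le_sup_of_le_left (Finset.le_sup (f := id) (Finset.mem_filter.2 ⟨hx, hxb⟩))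
        · exact le_sup_of_le_right ((htT hx).2.resolve_left hxb)
      have hbu : b ≤ u := by
        have h1 : b ≤ (u ⊔ bᶜ) ⊓ b := le_inf (le_trans (le_top.trans_eq htsup.symm) hcov) le_rfl
        calc b ≤ (u ⊔ bᶜ) ⊓ b := h1
          _ = (u ⊓ b) ⊔ (bᶜ ⊓ b) := by rw [inf_comm, inf_sup_left, inf_comm b u, inf_comm b bᶜ]
          _ = u ⊓ b := by rw [compl_inf_eq_bot, sup_bot_eq]
          _ ≤ u := inf_le_left
      have huS : u ∈ S := by
        refine Finset.sup_induction hSbot (fun x hx y hy => hSsup x hx y hy) ?_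
        intro x hx
        exact (htT (Finset.mem_filter.1 hx).1).1
      exact hbS (le_antisymm hbu hub ▸ huS)
    · -- build an ultrafilter of S compatible with both b and bᶜ
      set F₀ : Set B := {z | z ∈ S ∧ ∃ t : Finset B, ↑t ⊆ T ∧ (t.sup id)ᶜ ≤ z} with hF₀
      have hF₀rf : IsRF S F₀ := by
        refine ⟨fun z hz => hz.1, ⟨hStop, ∅, by simp, by simp⟩, ?_, ?_, ?_⟩
        · rintro z₁ ⟨hz₁, t₁, ht₁, hle₁⟩ z₂ ⟨hz₂, t₂, ht₂, hle₂⟩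
          refine ⟨hSinf z₁ hz₁ z₂ hz₂, t₁ ∪ t₂, ?_, ?_⟩
          · rw [Finset.coe_union]
            exact Set.union_subset ht₁ ht₂
          · rw [Finset.sup_union, compl_sup]
            exact le_inf (inf_le_left.trans hle₁) (inf_le_right.trans hle₂)
        · rintro z ⟨hzS, t, ht, hle⟩ y hy hzy
          exact ⟨hy, t, ht, hle.trans hzy⟩
        · rintro ⟨-, t, ht, hle⟩
          exact hfin ⟨t, ht, compl_eq_bot.1 (le_bot_iff.1 hle)⟩
      obtain ⟨M, hF₀M, hMrf, hMmax⟩ := rf_exists_max S F₀ hF₀rf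
      have hMkey : ∀ s ∈ M, s ⊓ b ≠ ⊥ ∧ s ⊓ bᶜ ≠ ⊥ := by
        intro s hs
        have hsS : s ∈ S := hMrf.1 hs
        have key : ∀ hsT : s ∈ T, False := by
          intro hsT
          have hscM : sᶜ ∈ M := hF₀M ⟨hScompl s hsS, {s}, by simpa using hsT, by simp⟩
          have : s ⊓ sᶜ ∈ M := hMrf.2.2.1 s hs sᶜ hscM
          rw [inf_compl_eq_bot] at this
          exact hMrf.2.2.2.2 this
        constructor
        · intro hsb
          exact key ⟨hsS, Or.inr (le_compl_iff_disjoint_right.2 (disjoint_iff.2 hsb))⟩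
        · intro hsb
          refine key ⟨hsS, Or.inl ?_⟩
          have := le_compl_iff_disjoint_right.2 (disjoint_iff.2 hsb)
          rwa [compl_compl] at this
      -- extend M ∪ {b} and M ∪ {bᶜ} to ultrafilters of B
      have hmkG : ∀ c : B, (∀ s ∈ M, s ⊓ c ≠ ⊥) →
          IsRF (Set.univ : Set B) {z | ∃ m ∈ M, m ⊓ c ≤ z} := by
        intro c hc
        refine ⟨fun z _ => Set.mem_univ z, ⟨⊤, hMrf.2.1, inf_le_left.trans le_top⟩, ?_, ?_, ?_⟩
        · rintro z₁ ⟨m₁, hm₁, hle₁⟩ z₂ ⟨m₂, hm₂, hle₂⟩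
          refine ⟨m₁ ⊓ m₂, hMrf.2.2.1 m₁ hm₁ m₂ hm₂, ?_⟩
          exact le_inf ((inf_le_inf_right c inf_le_left).trans hle₁)
            ((inf_le_inf_right c inf_le_right).trans hle₂)
        · rintro z ⟨m, hm, hle⟩ y _ hzy
          exact ⟨m, hm, hle.trans hzy⟩
        · rintro ⟨m, hm, hle⟩
          exact hc m hm (le_bot_iff.1 hle)
      obtain ⟨U, hGU, hUrf, hUmax⟩ := rf_exists_max (Set.univ : Set B) _
        (hmkG b fun s hs => (hMkey s hs).1)
      obtain ⟨V, hGV, hVrf, hVmax⟩ := rf_exists_max (Set.univ : Set B) _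
        (hmkG bᶜ fun s hs => (hMkey s hs).2)
      have hMU : M ⊆ U := fun m hm => hGU ⟨m, hm, inf_le_left⟩
      have hMV : M ⊆ V := fun m hm => hGV ⟨m, hm, inf_le_left⟩
      have hbU : b ∈ U := hGU ⟨⊤, hMrf.2.1, inf_le_right⟩
      have hbcV : bᶜ ∈ V := hGV ⟨⊤, hMrf.2.1, inf_le_right⟩
      have hbV : b ∉ V := by
        intro hbV
        have : b ⊓ bᶜ ∈ V := hVrf.2.2.1 b hbV bᶜ hbcV
        rw [inf_compl_eq_bot] at this
        exact hVrf.2.2.2.2 this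
      -- U and V agree on S
      have hinterU : U ∩ S ⊆ M := by
        refine hMmax (U ∩ S) ⟨fun z hz => hz.2, ⟨hUrf.2.1, hStop⟩, ?_, ?_, ?_⟩
          (fun m hm => ⟨hMU hm, hMrf.1 hm⟩)
        · rintro x ⟨hxU, hxS⟩ y ⟨hyU, hyS⟩
          exact ⟨hUrf.2.2.1 x hxU y hyU, hSinf x hxS y hyS⟩
        · rintro x ⟨hxU, hxS⟩ y hyS hxy
          exact ⟨hUrf.2.2.2.1 x hxU y (Set.mem_univ y) hxy, hyS⟩
        · rintro ⟨hbotU, -⟩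
          exact hUrf.2.2.2.2 hbotU
      have hinterV : V ∩ S ⊆ M := by
        refine hMmax (V ∩ S) ⟨fun z hz => hz.2, ⟨hVrf.2.1, hStop⟩, ?_, ?_, ?_⟩
          (fun m hm => ⟨hMV hm, hMrf.1 hm⟩)
        · rintro x ⟨hxV, hxS⟩ y ⟨hyV, hyS⟩
          exact ⟨hVrf.2.2.1 x hxV y hyV, hSinf x hxS y hyS⟩
        · rintro x ⟨hxV, hxS⟩ y hyS hxy
          exact ⟨hVrf.2.2.2.1 x hxV y (Set.mem_univ y) hxy, hyS⟩
        · rintro ⟨hbotV, -⟩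
          exact hVrf.2.2.2.2 hbotV
      have hagree : ∀ s ∈ S, (s ∈ U ↔ s ∈ V) := by
        intro s hsS
        exact ⟨fun h => hMV (hinterU ⟨h, hsS⟩), fun h => hMU (hinterV ⟨h, hsS⟩)⟩
      -- build the two homs to Prop
      have mkHom : ∀ (W : Set B), IsRF (Set.univ : Set B) W →
          (∀ F, IsRF (Set.univ : Set B) F → W ⊆ F → F ⊆ W) →
          ∃ g : BoundedLatticeHom B (ULift Prop), ∀ x : B, g x = ULift.up (x ∈ W) := by
        intro W hW hWmax
        refine ⟨⟨⟨⟨fun x => ULift.up (x ∈ W), ?_⟩, ?_⟩, ?_, ?_⟩, fun x => rfl⟩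
        · intro x y
          refine congrArg ULift.up ?_
          simp only [sup_Prop_eq]
          exact propext (rf_max_sup_mem hW hWmax)
        · intro x y
          refine congrArg ULift.up ?_
          simp only [inf_Prop_eq]
          refine propext ⟨fun h => ⟨?_, ?_⟩, fun h => hW.2.2.1 x h.1 y h.2⟩
          · exact hW.2.2.2.1 _ h x (Set.mem_univ x) inf_le_left
          · exact hW.2.2.2.1 _ h y (Set.mem_univ y) inf_le_right
        · exact congrArg ULift.up (by simpa using eq_true hW.2.1)
        · exact congrArg ULift.up (by simpa using eq_false hW.2.2.2.2)
      obtain ⟨g₀, hg⟩ := mkHom U hUrf hUmax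
      obtain ⟨h₀, hh⟩ := mkHom V hVrf hVmax
      let g : B ⟶ BoolAlg.of (ULift Prop) := BoolAlg.ofHom g₀
      let h : B ⟶ BoolAlg.of (ULift Prop) := BoolAlg.ofHom h₀
      have hcomp : f ≫ g = f ≫ h := by
        apply BoolAlg.ext
        intro a
        show g₀ (φ a) = h₀ (φ a)
        rw [hg, hh]
        exact congrArg ULift.up (propext (hagree (φ a) ⟨a, rfl⟩))
      have hgh : g = h := (cancel_epi f).1 hcomp
      have hbUV : (b ∈ U) = (b ∈ V) := by
        have hgh' : g₀ = h₀ := congrArg (fun k => k.hom) hgh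
        have h2 : g₀ b = h₀ b := DFunLike.congr_fun hgh' b
        rw [hg, hh] at h2
        exact congrArg ULift.down h2
      exact hbV (hbUV ▸ hbU)
  · intro hsurj
    exact ConcreteCategory.epi_of_surjective f hsurj
end

section
/- In the frame UpperSet ℕ of upward closed subsets of ℕ, the infimum ⨅_{m ∈ ℕ} (Ici m ⇨ Ici (m+1)) equals ⊥ (the empty upper set). -/
open OrderDual

/-- The frame of upward closed subsets of `ℕ`, ordered by inclusion
(lower sets of `ℕᵒᵈ` are exactly the upward closed subsets of `ℕ`,
and `LowerSet` is ordered by inclusion). -/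
abbrev UpNat := LowerSet ℕᵒᵈ

/-- The upper set `Ici m = {n : ℕ | m ≤ n}`, as an element of `UpNat`. -/
def upIci (m : ℕ) : UpNat := LowerSet.Iic (toDual m)

/-- In the frame of upward closed subsets of `ℕ` ordered by inclusion, the infimum
`⨅_{m ∈ ℕ} (Ici m ⇨ Ici (m+1))` is `⊥`, the empty upper set. -/
theorem upNat_iInf_himp_eq_bot :
    (⨅ m : ℕ, upIci m ⇨ upIci (m + 1)) = (⊥ : UpNat) := by
  rw [eq_bot_iff]
  intro nd hn
  set n : ℕ := ofDual nd with hndef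
  have hn' : toDual n ∈ (⨅ m : ℕ, upIci m ⇨ upIci (m + 1)) := hn
  have h1 : (⨅ m : ℕ, upIci m ⇨ upIci (m + 1)) ≤ upIci n ⇨ upIci (n + 1) :=
    iInf_le _ n
  have h2 : upIci n ≤ ⨅ m : ℕ, upIci m ⇨ upIci (m + 1) := by
    intro k hk
    exact (⨅ m : ℕ, upIci m ⇨ upIci (m + 1)).lower hk hn'
  have h3 : upIci n ≤ upIci (n + 1) := by
    have := le_himp_iff.mp (h2.trans h1)
    simpa using this
  have : n + 1 ≤ n := h3 (le_refl (toDual n))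
  omega
end
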